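/- arXiv:1207.5450 — 4 statements merged into one kernel-verified Lean document; each statement's English description precedes it below -/
import Mathlib

section
/- For each integer n ≥ 1, the period-doubling sequence has a nonempty factor whose least period is exactly n. -/
/-- `n` is a period of the factor `x[i..j]` of the infinite word `x`:
`x t = x (t+n)` for all `i ≤ t ≤ j - n`. -/
def Period {A : Type*} (x : ℕ → A) (i j n : ℕ) : Prop :=
  ∀ t, i ≤ t → t + n ≤ j → x t = x (t + n)

/-- `n` is a least period of `x`: some nonempty factor `x[i..j]` has
minimal period `n`. -/
def LeastPeriod {A : Type*} (x : ℕ → A) (n : ℕ) : Prop :=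
  ∃ i j, i ≤ j ∧ Period x i j n ∧ ∀ m, 0 < m → m < n → ¬ Period x i j m

/-- The Thue-Morse sequence: sum of binary digits of `n`, mod 2. -/
def thueMorse (n : ℕ) : ℕ := (Nat.digits 2 n).sum % 2

/-- The period-doubling sequence. -/
def periodDoubling (n : ℕ) : ℕ := if thueMorse n = thueMorse (n + 1) then 0 else 1


lemma tm_lt (k : ℕ) : thueMorse k < 2 := by unfold thueMorse; omega

lemma tm_two_mul (k : ℕ) : thueMorse (2*k) = thueMorse k := by
  rcases Nat.eq_zero_or_pos k with rfl | hk
  · rfl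
  · unfold thueMorse
    rw [Nat.digits_def' (by norm_num : 1 < 2) (by omega)]
    simp [Nat.mul_div_cancel_left, Nat.mul_mod_right]

lemma tm_two_mul_add_one (k : ℕ) : thueMorse (2*k+1) = (thueMorse k + 1) % 2 := by
  unfold thueMorse
  rw [Nat.digits_def' (by norm_num : 1 < 2) (by omega)]
  have h1 : (2*k+1) % 2 = 1 := by omega
  have h2 : (2*k+1) / 2 = k := by omega
  rw [h1, h2]
  simp [List.sum_cons]
  omega

lemma pd_even (k : ℕ) : periodDoubling (2*k) = 1 := by
  unfold periodDoubling
  rw [tm_two_mul, tm_two_mul_add_one]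
  have := tm_lt k
  rw [if_neg (by omega)]

lemma pd_odd (k : ℕ) : periodDoubling (2*k+1) = 1 - periodDoubling k := by
  unfold periodDoubling
  have e1 : 2*k+1+1 = 2*(k+1) := by ring
  rw [e1, tm_two_mul_add_one, tm_two_mul]
  have h1 := tm_lt k
  have h2 := tm_lt (k+1)
  split_ifs with h h' <;> omega

lemma pd_lt (k : ℕ) : periodDoubling k < 2 := by
  unfold periodDoubling; split <;> omega

lemma pd_consec (k : ℕ) : periodDoubling k = 1 ∨ periodDoubling (k+1) = 1 := by
  rcases Nat.even_or_odd k with ⟨r, hr⟩ | ⟨r, hr⟩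
  · left; rw [show k = 2*r by omega, pd_even]
  · right; rw [show k+1 = 2*(r+1) by omega, pd_even]

lemma key : ∀ n, 2 ≤ n → ∃ i,
    (∀ m, 0 < m → m < n → ¬ Period periodDoubling i (i + n - 1) m) ∧
    periodDoubling i ≠ periodDoubling (i + n - 1) := by
  intro n
  induction n using Nat.strong_induction_on with
  | _ n ih =>
  intro hn
  rcases Nat.even_or_odd n with ⟨m, hm⟩ | ⟨m, hm⟩
  · -- n = m + m
    subst hm
    by_cases hm1 : m = 1
    · -- base case n = 2
      subst hm1
      have h0 : periodDoubling 0 = 1 := by have := pd_even 0; norm_num at this; exact this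
      have h1 : periodDoubling 1 = 0 := by
        have := pd_odd 0; norm_num at this; omega
      refine ⟨0, ?_, ?_⟩
      · intro p hp0 hp2 hP
        have hp1 : p = 1 := by omega
        subst hp1
        have h := hP 0 (by omega) (by omega)
        norm_num at h
        omega
      · norm_num
        omega
    · have hm2 : 2 ≤ m := by omega
      obtain ⟨i, hap, hne⟩ := ih m (by omega) hm2
      have hL := pd_lt (i + m - 1)
      have hF := pd_lt i
      rcases Nat.lt_or_ge (periodDoubling (i + m - 1)) 1 with hc | hc
      · -- d(i+m-1) = 0, so d i = 1 : use 2i+1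
        have hFi : periodDoubling i = 1 := by omega
        refine ⟨2*i+1, ?_, ?_⟩
        · intro p hp0 hpn hP
          rcases Nat.even_or_odd p with ⟨p', hp'⟩ | ⟨p', hp'⟩
          · subst hp'
            have hper : Period periodDoubling i (i + m - 1) p' := by
              intro t ht htp
              have h1 := hP (2*t+1) (by omega) (by omega)
              have e : 2*t+1+(p'+p') = 2*(t+p')+1 := by ring
              rw [e, pd_odd, pd_odd] at h1
              have := pd_lt t; have := pd_lt (t+p'); omega
            exact hap p' (by omega) (by omega) hper
          · subst hp'
            -- odd period: d k = 0 for k in [i, i+m-p'-1]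
            have zk : ∀ k, i ≤ k → k ≤ i + m - p' - 1 → periodDoubling k = 0 := by
              intro k hk1 hk2
              have h1 := hP (2*k+1) (by omega) (by omega)
              have e : 2*k+1+(2*p'+1) = 2*(k+p'+1) := by ring
              rw [e, pd_even] at h1
              have e2 : 2*k+1 = 2*k+1 := rfl
              rw [pd_odd] at h1
              have := pd_lt k; omega
            by_cases hp2 : p' + 2 ≤ m
            · have z1 := zk i (le_refl _) (by omega)
              have z2 := zk (i+1) (by omega) (by omega)
              have := pd_consec i
              omega
            · -- p' = m - 1
              have z1 := zk i (le_refl _) (by omega)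
              omega
        · have e1 : 2*i+1 + (m+m) - 1 = 2*(i+m) := by omega
          rw [e1, pd_even, pd_odd]
          omega
      · -- d(i+m-1) = 1 : use 2i
        have hLi : periodDoubling (i + m - 1) = 1 := by omega
        refine ⟨2*i, ?_, ?_⟩
        · intro p hp0 hpn hP
          rcases Nat.even_or_odd p with ⟨p', hp'⟩ | ⟨p', hp'⟩
          · subst hp'
            have hper : Period periodDoubling i (i + m - 1) p' := by
              intro t ht htp
              have h1 := hP (2*t+1) (by omega) (by omega)
              have e : 2*t+1+(p'+p') = 2*(t+p')+1 := by ring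
              rw [e, pd_odd, pd_odd] at h1
              have := pd_lt t; have := pd_lt (t+p'); omega
            exact hap p' (by omega) (by omega) hper
          · subst hp'
            -- d(k+p') = 0 for k in [i, i+m-1-p']
            have zk : ∀ k, i ≤ k → k ≤ i + m - 1 - p' → periodDoubling (k + p') = 0 := by
              intro k hk1 hk2
              have h1 := hP (2*k) (by omega) (by omega)
              have e : 2*k+(2*p'+1) = 2*(k+p')+1 := by ring
              rw [e, pd_even, pd_odd] at h1
              have := pd_lt (k+p'); omega
            by_cases hp2 : p' + 2 ≤ m
            · have z1 := zk i (le_refl _) (by omega)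
              have z2 := zk (i+1) (by omega) (by omega)
              have e2 : i + 1 + p' = i + p' + 1 := by omega
              rw [e2] at z2
              have := pd_consec (i + p')
              omega
            · -- p' = m - 1
              have z1 := zk i (le_refl _) (by omega)
              have e2 : i + p' = i + m - 1 := by omega
              rw [e2] at z1
              omega
        · have e1 : 2*i + (m+m) - 1 = 2*(i+m-1)+1 := by omega
          rw [e1, pd_even, pd_odd]
          omega
  · -- n = 2*m + 1, m ≥ 1
    subst hm
    have hm1 : 1 ≤ m := by omega
    obtain ⟨i, hap, hne⟩ := ih (m+1) (by omega) (by omega)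
    have hIidx : i + (m+1) - 1 = i + m := by omega
    rw [hIidx] at hap hne
    refine ⟨2*i+1, ?_, ?_⟩
    · intro p hp0 hpn hP
      rcases Nat.even_or_odd p with ⟨p', hp'⟩ | ⟨p', hp'⟩
      · subst hp'
        have hper : Period periodDoubling i (i + m) p' := by
          intro t ht htp
          have h1 := hP (2*t+1) (by omega) (by omega)
          have e : 2*t+1+(p'+p') = 2*(t+p')+1 := by ring
          rw [e, pd_odd, pd_odd] at h1
          have := pd_lt t; have := pd_lt (t+p'); omega
        exact hap p' (by omega) (by omega) hper
      · subst hp'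
        -- family2: d k = 0 for k in [i, i+m-p'-1]
        have zk : ∀ k, i ≤ k → k ≤ i + m - p' - 1 → periodDoubling k = 0 := by
          intro k hk1 hk2
          have h1 := hP (2*k+1) (by omega) (by omega)
          have e : 2*k+1+(2*p'+1) = 2*(k+p'+1) := by ring
          rw [e, pd_even, pd_odd] at h1
          have := pd_lt k; omega
        by_cases hp2 : p' + 2 ≤ m
        · have z1 := zk i (le_refl _) (by omega)
          have z2 := zk (i+1) (by omega) (by omega)
          have := pd_consec i
          omega
        · -- p' = m - 1 : d i = 0 and d (i+m) = 0, contradicting hne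
          have hpm : p' = m - 1 := by omega
          have z1 := zk i (le_refl _) (by omega)
          -- family1 at k = i+1 gives d(i+m) = 0
          have h1 := hP (2*(i+1)) (by omega) (by omega)
          have e : 2*(i+1)+(2*p'+1) = 2*(i+m)+1 := by omega
          rw [e, pd_even, pd_odd] at h1
          have := pd_lt (i+m)
          omega
    · have e1 : 2*i+1 + (2*m+1) - 1 = 2*(i+m)+1 := by omega
      rw [e1, pd_odd, pd_odd]
      have := pd_lt i; have := pd_lt (i+m)
      omega

theorem periodDoubling_leastPeriod (n : ℕ) (hn : 1 ≤ n) :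
    LeastPeriod periodDoubling n := by
  rcases Nat.lt_or_ge n 2 with h2 | h2
  · -- n = 1
    have hn1 : n = 1 := by omega
    subst hn1
    exact ⟨0, 0, le_refl 0, fun t ht htp => by omega, fun m hm0 hm1 => by omega⟩
  · obtain ⟨i, hap, hne⟩ := key n h2
    refine ⟨i, i + n - 1, by omega, ?_, hap⟩
    intro t ht htp
    omega
end

section
/- The integer 18 is not a least period of the paperfolding sequence: no nonempty factor of the paperfolding sequence has least period exactly 18. -/
/-- The regular paperfolding sequence: `p n = m % 2` where
`n + 1 = 2 ^ k * (2 * m + 1)`. -/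
def paperfolding (n : ℕ) : ℕ :=
  (((n + 1) / 2 ^ ((n + 1).factorization 2) - 1) / 2) % 2

lemma pf_e {n s : ℕ} (h : n = 2 * s) : paperfolding n = s % 2 := by
  subst h
  unfold paperfolding
  have h0 : (2 * s + 1).factorization 2 = 0 :=
    Nat.factorization_eq_zero_of_not_dvd (by omega)
  rw [h0]
  simp

lemma pf_o {n s : ℕ} (h : n = 2 * s + 1) : paperfolding n = paperfolding s := by
  subst h
  unfold paperfolding
  have h1 : (2 * s + 1 + 1) = 2 * (s + 1) := by ring
  rw [h1]
  have h2 : (2 * (s + 1)).factorization 2 = 1 + (s + 1).factorization 2 := by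
    rw [Nat.factorization_mul (by norm_num) (Nat.succ_ne_zero s)]
    simp [Nat.Prime.factorization Nat.prime_two]
  rw [h2, pow_add, pow_one]
  rw [Nat.mul_div_mul_left _ _ (by norm_num : 0 < 2)]

lemma pf_lt (n : ℕ) : paperfolding n < 2 := Nat.mod_lt _ (by norm_num)

lemma keyL (s : ℕ) (h1 : paperfolding s = s % 2) (h2 : paperfolding (s + 8) ≠ s % 2) :
    paperfolding (s + 7) = s % 2 ∧ paperfolding (s + 1) = (s + 1) % 2 := by
  rcases Nat.even_or_odd s with ⟨u, rfl⟩ | ⟨u, rfl⟩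
  · rw [pf_e (show u + u = 2 * u by omega)] at h1
    rw [pf_e (show u + u + 8 = 2 * (u + 4) by omega)] at h2
    omega
  · rw [pf_o (show 2 * u + 1 = 2 * u + 1 by omega)] at h1
    rw [pf_o (show 2 * u + 1 + 8 = 2 * (u + 4) + 1 by omega)] at h2
    rcases Nat.even_or_odd u with ⟨v, rfl⟩ | ⟨v, rfl⟩
    · rw [pf_e (show v + v = 2 * v by omega)] at h1
      rw [pf_e (show v + v + 4 = 2 * (v + 2) by omega)] at h2
      omega
    · constructor
      · rw [pf_e (show 2 * (2 * v + 1) + 1 + 7 = 2 * (2 * v + 5) by omega)]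
        omega
      · rw [pf_e (show 2 * (2 * v + 1) + 1 + 1 = 2 * (2 * v + 2) by omega)]
        omega

lemma keyL2 (s : ℕ) (h1 : paperfolding s = s % 2)
    (h2 : paperfolding s = paperfolding (s + 9)) :
    paperfolding (s + 8) = paperfolding s ∧ paperfolding (s + 1) = paperfolding (s + 9) := by
  rcases Nat.even_or_odd s with ⟨u, rfl⟩ | ⟨u, rfl⟩
  · rw [pf_e (show u + u = 2 * u by omega)] at h1
    have hu : u % 2 = 0 := by omega
    obtain ⟨v, rfl⟩ : ∃ v, u = 2 * v := ⟨u / 2, by omega⟩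
    constructor
    · rw [pf_e (show 2 * v + 2 * v + 8 = 2 * (2 * v + 4) by omega),
        pf_e (show 2 * v + 2 * v = 2 * (2 * v) by omega)]
      omega
    · rw [pf_o (show 2 * v + 2 * v + 1 = 2 * (2 * v) + 1 by omega),
        pf_o (show 2 * v + 2 * v + 9 = 2 * (2 * v + 4) + 1 by omega),
        pf_e (show 2 * v = 2 * v by omega),
        pf_e (show 2 * v + 4 = 2 * (v + 2) by omega)]
      omega
  · rw [pf_o (show 2 * u + 1 = 2 * u + 1 by omega)] at h1 h2
    rw [pf_e (show 2 * u + 1 + 9 = 2 * (u + 5) by omega)] at h2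
    have hu : u % 2 = 0 := by omega
    obtain ⟨v, rfl⟩ : ∃ v, u = 2 * v := ⟨u / 2, by omega⟩
    constructor
    · rw [pf_o (show 2 * (2 * v) + 1 + 8 = 2 * (2 * v + 4) + 1 by omega),
        pf_o (show 2 * (2 * v) + 1 = 2 * (2 * v) + 1 by omega),
        pf_e (show 2 * v + 4 = 2 * (v + 2) by omega),
        pf_e (show 2 * v = 2 * v by omega)]
      omega
    · rw [pf_e (show 2 * (2 * v) + 1 + 1 = 2 * (2 * v + 1) by omega),
        pf_e (show 2 * (2 * v) + 1 + 9 = 2 * (2 * v + 5) by omega)]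
      omega

theorem paperfolding_not_leastPeriod_eighteen :
    ¬ LeastPeriod paperfolding 18 := by
  rintro ⟨i, j, hij, hper, hmin⟩
  have hj2 : j ≤ i + 18 := by
    by_contra hc
    push_neg at hc
    rcases Nat.even_or_odd i with ⟨s, rfl⟩ | ⟨s, rfl⟩
    · have h := hper (s + s) le_rfl (by omega)
      rw [pf_e (show s + s = 2 * s by omega),
        pf_e (show s + s + 18 = 2 * (s + 9) by omega)] at h
      omega
    · have h := hper (2 * s + 2) (by omega) (by omega)
      rw [pf_e (show 2 * s + 2 = 2 * (s + 1) by omega),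
        pf_e (show 2 * s + 2 + 18 = 2 * (s + 10) by omega)] at h
      omega
  have hj1 : i + 17 ≤ j := by
    by_contra hc
    push_neg at hc
    exact hmin (j - i + 1) (by omega) (by omega) (fun t ht1 ht2 => absurd ht2 (by omega))
  rcases (by omega : j = i + 17 ∨ j = i + 18) with h | h <;> subst h
  · -- window of length 18
    rcases Nat.even_or_odd i with ⟨s, rfl⟩ | ⟨s, rfl⟩
    · by_cases h17 : paperfolding (s + 8) = s % 2
      · refine hmin 17 (by omega) (by omega) ?_
        intro t ht1 ht2
        obtain rfl : t = s + s := by omega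
        rw [pf_e (show s + s = 2 * s by omega),
          pf_o (show s + s + 17 = 2 * (s + 8) + 1 by omega)]
        exact h17.symm
      · by_cases h16 : paperfolding s = paperfolding (s + 8)
        · refine hmin 16 (by omega) (by omega) ?_
          intro t ht1 ht2
          rcases (by omega : t = s + s ∨ t = s + s + 1) with rfl | rfl
          · rw [pf_e (show s + s = 2 * s by omega),
              pf_e (show s + s + 16 = 2 * (s + 8) by omega)]
            omega
          · rw [pf_o (show s + s + 1 = 2 * s + 1 by omega),
              pf_o (show s + s + 1 + 16 = 2 * (s + 8) + 1 by omega)]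
            exact h16
        · have hps : paperfolding s = s % 2 := by
            have := pf_lt s; have := pf_lt (s + 8); omega
          obtain ⟨k1, k2⟩ := keyL s hps h17
          refine hmin 15 (by omega) (by omega) ?_
          intro t ht1 ht2
          rcases (by omega : t = s + s ∨ t = s + s + 1 ∨ t = s + s + 2) with rfl | rfl | rfl
          · rw [pf_e (show s + s = 2 * s by omega),
              pf_o (show s + s + 15 = 2 * (s + 7) + 1 by omega)]
            exact k1.symm
          · rw [pf_o (show s + s + 1 = 2 * s + 1 by omega),
              pf_e (show s + s + 1 + 15 = 2 * (s + 8) by omega)]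
            omega
          · rw [pf_e (show s + s + 2 = 2 * (s + 1) by omega),
              pf_o (show s + s + 2 + 15 = 2 * (s + 8) + 1 by omega)]
            have := pf_lt (s + 8); omega
    · by_cases h17 : paperfolding s = (s + 1) % 2
      · refine hmin 17 (by omega) (by omega) ?_
        intro t ht1 ht2
        obtain rfl : t = 2 * s + 1 := by omega
        rw [pf_o (show 2 * s + 1 = 2 * s + 1 by omega),
          pf_e (show 2 * s + 1 + 17 = 2 * (s + 9) by omega)]
        omega
      · have hps : paperfolding s = s % 2 := by have := pf_lt s; omega
        by_cases h16 : paperfolding s = paperfolding (s + 8)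
        · refine hmin 16 (by omega) (by omega) ?_
          intro t ht1 ht2
          rcases (by omega : t = 2 * s + 1 ∨ t = 2 * s + 2) with rfl | rfl
          · rw [pf_o (show 2 * s + 1 = 2 * s + 1 by omega),
              pf_o (show 2 * s + 1 + 16 = 2 * (s + 8) + 1 by omega)]
            exact h16
          · rw [pf_e (show 2 * s + 2 = 2 * (s + 1) by omega),
              pf_e (show 2 * s + 2 + 16 = 2 * (s + 9) by omega)]
            omega
        · have h8 : paperfolding (s + 8) ≠ s % 2 := by omega
          obtain ⟨k1, k2⟩ := keyL s hps h8
          refine hmin 15 (by omega) (by omega) ?_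
          intro t ht1 ht2
          rcases (by omega : t = 2 * s + 1 ∨ t = 2 * s + 2 ∨ t = 2 * s + 3) with rfl | rfl | rfl
          · rw [pf_o (show 2 * s + 1 = 2 * s + 1 by omega),
              pf_e (show 2 * s + 1 + 15 = 2 * (s + 8) by omega)]
            omega
          · rw [pf_e (show 2 * s + 2 = 2 * (s + 1) by omega),
              pf_o (show 2 * s + 2 + 15 = 2 * (s + 8) + 1 by omega)]
            have := pf_lt (s + 8); omega
          · rw [pf_o (show 2 * s + 3 = 2 * (s + 1) + 1 by omega),
              pf_e (show 2 * s + 3 + 15 = 2 * (s + 9) by omega)]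
            omega
  · -- window of length 19
    rcases Nat.even_or_odd i with ⟨s, rfl⟩ | ⟨s, rfl⟩
    · have h := hper (s + s) le_rfl (by omega)
      rw [pf_e (show s + s = 2 * s by omega),
        pf_e (show s + s + 18 = 2 * (s + 9) by omega)] at h
      omega
    · have hh := hper (2 * s + 1) le_rfl (by omega)
      rw [pf_o (show 2 * s + 1 = 2 * s + 1 by omega),
        pf_o (show 2 * s + 1 + 18 = 2 * (s + 9) + 1 by omega)] at hh
      by_cases h17 : paperfolding s = (s + 1) % 2
      · refine hmin 17 (by omega) (by omega) ?_
        intro t ht1 ht2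
        rcases (by omega : t = 2 * s + 1 ∨ t = 2 * s + 2) with rfl | rfl
        · rw [pf_o (show 2 * s + 1 = 2 * s + 1 by omega),
            pf_e (show 2 * s + 1 + 17 = 2 * (s + 9) by omega)]
          omega
        · rw [pf_e (show 2 * s + 2 = 2 * (s + 1) by omega),
            pf_o (show 2 * s + 2 + 17 = 2 * (s + 9) + 1 by omega)]
          omega
      · have hps : paperfolding s = s % 2 := by have := pf_lt s; omega
        obtain ⟨k1, k2⟩ := keyL2 s hps hh
        refine hmin 16 (by omega) (by omega) ?_
        intro t ht1 ht2
        rcases (by omega : t = 2 * s + 1 ∨ t = 2 * s + 2 ∨ t = 2 * s + 3) with rfl | rfl | rfl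
        · rw [pf_o (show 2 * s + 1 = 2 * s + 1 by omega),
            pf_o (show 2 * s + 1 + 16 = 2 * (s + 8) + 1 by omega)]
          exact k1.symm
        · rw [pf_e (show 2 * s + 2 = 2 * (s + 1) by omega),
            pf_e (show 2 * s + 2 + 16 = 2 * (s + 9) by omega)]
          omega
        · rw [pf_o (show 2 * s + 3 = 2 * (s + 1) + 1 by omega),
            pf_o (show 2 * s + 3 + 16 = 2 * (s + 9) + 1 by omega)]
          exact k2
end

section
/- There are infinitely many positive integers that are not least periods of the paperfolding sequence. -/
lemma pf_even (a : ℕ) : paperfolding (2*a) = a % 2 := by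
  have h : (2*a+1).factorization 2 = 0 :=
    Nat.factorization_eq_zero_of_not_dvd (by omega)
  unfold paperfolding
  rw [h, pow_zero, Nat.div_one]
  omega

lemma pfodd (t : ℕ) : paperfolding (2*t+1) = paperfolding t := by
  unfold paperfolding
  have h1 : 2*t+1+1 = 2*(t+1) := by ring
  rw [h1]
  have h2 : (2*(t+1)).factorization 2 = (t+1).factorization 2 + 1 := by
    rw [Nat.factorization_mul two_ne_zero (by omega : t+1 ≠ 0), Finsupp.add_apply,
      Nat.Prime.factorization_self Nat.prime_two]
    omega
  rw [h2, pow_succ, mul_comm (2^((t+1).factorization 2)) 2,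
    Nat.mul_div_mul_left _ _ (by norm_num)]

lemma pf_cases (t : ℕ) : paperfolding t = 0 ∨ paperfolding t = 1 := by
  unfold paperfolding; omega

lemma shift16 (t k : ℕ) (h : (t+1) % 8 ≠ 0) :
    paperfolding t = paperfolding (t + 16*k) := by
  rcases Nat.even_or_odd t with ⟨s, rfl⟩ | ⟨s, rfl⟩
  · rw [show s+s+16*k = 2*(s+8*k) by ring, show s+s = 2*s by ring, pf_even, pf_even]
    omega
  · rw [show 2*s+1+16*k = 2*(s+8*k)+1 by ring, pfodd, pfodd]
    rcases Nat.even_or_odd s with ⟨u, rfl⟩ | ⟨u, rfl⟩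
    · rw [show u+u+8*k = 2*(u+4*k) by ring, show u+u = 2*u by ring, pf_even, pf_even]
      omega
    · obtain ⟨w, rfl⟩ : ∃ w, u = 2*w := ⟨u/2, by omega⟩
      rw [show 2*(2*w)+1+8*k = 2*(2*w+4*k)+1 by ring, pfodd, pfodd,
        show 2*w+4*k = 2*(w+2*k) by ring, pf_even, pf_even]
      omega

lemma p16_0 (a : ℕ) : paperfolding (16*a) = 0 := by
  rw [show 16*a = 2*(8*a) by ring, pf_even]; omega
lemma p16_1 (a : ℕ) : paperfolding (16*a+1) = 0 := by
  rw [show 16*a+1 = 2*(8*a)+1 by ring, pfodd, show 8*a = 2*(4*a) by ring, pf_even]; omega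
lemma p16_2 (a : ℕ) : paperfolding (16*a+2) = 1 := by
  rw [show 16*a+2 = 2*(8*a+1) by ring, pf_even]; omega
lemma p16_3 (a : ℕ) : paperfolding (16*a+3) = 0 := by
  rw [show 16*a+3 = 2*(8*a+1)+1 by ring, pfodd, show 8*a+1 = 2*(4*a)+1 by ring, pfodd,
    show 4*a = 2*(2*a) by ring, pf_even]; omega
lemma p16_4 (a : ℕ) : paperfolding (16*a+4) = 0 := by
  rw [show 16*a+4 = 2*(8*a+2) by ring, pf_even]; omega
lemma p16_5 (a : ℕ) : paperfolding (16*a+5) = 1 := by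
  rw [show 16*a+5 = 2*(8*a+2)+1 by ring, pfodd, show 8*a+2 = 2*(4*a+1) by ring, pf_even]; omega
lemma p16_6 (a : ℕ) : paperfolding (16*a+6) = 1 := by
  rw [show 16*a+6 = 2*(8*a+3) by ring, pf_even]; omega
lemma p16_7 (a : ℕ) : paperfolding (16*a+7) = a % 2 := by
  rw [show 16*a+7 = 2*(8*a+3)+1 by ring, pfodd, show 8*a+3 = 2*(4*a+1)+1 by ring, pfodd,
    show 4*a+1 = 2*(2*a)+1 by ring, pfodd, show 2*a = 2*a by rfl, pf_even]
lemma p16_8 (a : ℕ) : paperfolding (16*a+8) = 0 := by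
  rw [show 16*a+8 = 2*(8*a+4) by ring, pf_even]; omega
lemma p16_9 (a : ℕ) : paperfolding (16*a+9) = 0 := by
  rw [show 16*a+9 = 2*(8*a+4)+1 by ring, pfodd, show 8*a+4 = 2*(4*a+2) by ring, pf_even]; omega
lemma p16_10 (a : ℕ) : paperfolding (16*a+10) = 1 := by
  rw [show 16*a+10 = 2*(8*a+5) by ring, pf_even]; omega
lemma p16_11 (a : ℕ) : paperfolding (16*a+11) = 1 := by
  rw [show 16*a+11 = 2*(8*a+5)+1 by ring, pfodd, show 8*a+5 = 2*(4*a+2)+1 by ring, pfodd,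
    show 4*a+2 = 2*(2*a+1) by ring, pf_even]; omega
lemma p16_12 (a : ℕ) : paperfolding (16*a+12) = 0 := by
  rw [show 16*a+12 = 2*(8*a+6) by ring, pf_even]; omega
lemma p16_13 (a : ℕ) : paperfolding (16*a+13) = 1 := by
  rw [show 16*a+13 = 2*(8*a+6)+1 by ring, pfodd, show 8*a+6 = 2*(4*a+3) by ring, pf_even]; omega
lemma p16_14 (a : ℕ) : paperfolding (16*a+14) = 1 := by
  rw [show 16*a+14 = 2*(8*a+7) by ring, pf_even]; omega
lemma p16_15 (a : ℕ) : paperfolding (16*a+15) = paperfolding a := by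
  rw [show 16*a+15 = 2*(8*a+7)+1 by ring, pfodd, show 8*a+7 = 2*(4*a+3)+1 by ring, pfodd,
    show 4*a+3 = 2*(2*a+1)+1 by ring, pfodd, pfodd]

lemma borderA (k i : ℕ) (hk : 0 < k) :
    paperfolding i = paperfolding (i + (16*k+1)) ∨
    (paperfolding i = paperfolding (i + 16*k) ∧
      paperfolding (i+1) = paperfolding (i+1 + 16*k)) ∨
    (paperfolding i = paperfolding (i + (16*k-1)) ∧
      paperfolding (i+1) = paperfolding (i+1 + (16*k-1)) ∧
      paperfolding (i+2) = paperfolding (i+2 + (16*k-1))) := by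
  obtain ⟨a, r, hr, rfl⟩ : ∃ a r, r < 16 ∧ i = 16*a + r :=
    ⟨i/16, i%16, by omega, by omega⟩
  interval_cases r
  · refine Or.inr (Or.inl ⟨shift16 _ k ?_, shift16 _ k ?_⟩) <;> omega
  · refine Or.inr (Or.inl ⟨shift16 _ k ?_, shift16 _ k ?_⟩) <;> omega
  · refine Or.inr (Or.inl ⟨shift16 _ k ?_, shift16 _ k ?_⟩) <;> omega
  · refine Or.inr (Or.inl ⟨shift16 _ k ?_, shift16 _ k ?_⟩) <;> omega
  · refine Or.inr (Or.inl ⟨shift16 _ k ?_, shift16 _ k ?_⟩) <;> omega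
  · refine Or.inr (Or.inl ⟨shift16 _ k ?_, shift16 _ k ?_⟩) <;> omega
  · -- r = 6
    rw [show 16*a+6+(16*k+1) = 16*(a+k)+7 by ring,
      show 16*a+6+16*k = 16*(a+k)+6 by ring,
      show 16*a+6+1+16*k = 16*(a+k)+7 by ring,
      show 16*a+6+(16*k-1) = 16*(a+k)+5 by omega,
      show 16*a+6+1+(16*k-1) = 16*(a+k)+6 by omega,
      show 16*a+6+2+(16*k-1) = 16*(a+k)+7 by omega,
      show 16*a+6+1 = 16*a+7 by ring,
      show 16*a+6+2 = 16*a+8 by ring]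
    simp only [p16_5, p16_6, p16_7, p16_8, true_and, and_true]
    omega
  · -- r = 7
    rw [show 16*a+7+(16*k+1) = 16*(a+k)+8 by ring,
      show 16*a+7+16*k = 16*(a+k)+7 by ring,
      show 16*a+7+1+16*k = 16*(a+k)+8 by ring,
      show 16*a+7+(16*k-1) = 16*(a+k)+6 by omega,
      show 16*a+7+1+(16*k-1) = 16*(a+k)+7 by omega,
      show 16*a+7+2+(16*k-1) = 16*(a+k)+8 by omega,
      show 16*a+7+1 = 16*a+8 by ring,
      show 16*a+7+2 = 16*a+9 by ring]
    simp only [p16_6, p16_7, p16_8, p16_9, true_and, and_true]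
    omega
  · refine Or.inr (Or.inl ⟨shift16 _ k ?_, shift16 _ k ?_⟩) <;> omega
  · refine Or.inr (Or.inl ⟨shift16 _ k ?_, shift16 _ k ?_⟩) <;> omega
  · refine Or.inr (Or.inl ⟨shift16 _ k ?_, shift16 _ k ?_⟩) <;> omega
  · refine Or.inr (Or.inl ⟨shift16 _ k ?_, shift16 _ k ?_⟩) <;> omega
  · refine Or.inr (Or.inl ⟨shift16 _ k ?_, shift16 _ k ?_⟩) <;> omega
  · refine Or.inr (Or.inl ⟨shift16 _ k ?_, shift16 _ k ?_⟩) <;> omega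
  · -- r = 14
    rw [show 16*a+14+(16*k+1) = 16*(a+k)+15 by ring,
      show 16*a+14+16*k = 16*(a+k)+14 by ring,
      show 16*a+14+1+16*k = 16*(a+k)+15 by ring,
      show 16*a+14+(16*k-1) = 16*(a+k)+13 by omega,
      show 16*a+14+1+(16*k-1) = 16*(a+k)+14 by omega,
      show 16*a+14+2+(16*k-1) = 16*(a+k)+15 by omega,
      show 16*a+14+1 = 16*a+15 by ring,
      show 16*a+14+2 = 16*(a+1) by ring]
    simp only [p16_0, p16_13, p16_14, p16_15, true_and, and_true]
    rcases pf_cases a with h1 | h1 <;> rcases pf_cases (a+k) with h2 | h2 <;> omega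
  · -- r = 15
    rw [show 16*a+15+(16*k+1) = 16*(a+k+1) by ring,
      show 16*a+15+16*k = 16*(a+k)+15 by ring,
      show 16*a+15+1+16*k = 16*(a+k+1) by ring,
      show 16*a+15+(16*k-1) = 16*(a+k)+14 by omega,
      show 16*a+15+1+(16*k-1) = 16*(a+k)+15 by omega,
      show 16*a+15+2+(16*k-1) = 16*(a+k+1) by omega,
      show 16*a+15+1 = 16*(a+1) by ring,
      show 16*a+15+2 = 16*(a+1)+1 by ring]
    simp only [p16_0, p16_1, p16_14, p16_15, true_and, and_true]
    rcases pf_cases a with h1 | h1 <;> rcases pf_cases (a+k) with h2 | h2 <;> omega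

lemma borderB (k i : ℕ) (hk : 0 < k)
    (H : paperfolding i = paperfolding (i + (16*k+2))) :
    (paperfolding i = paperfolding (i + (16*k+1)) ∧
      paperfolding (i+1) = paperfolding (i+1 + (16*k+1))) ∨
    (paperfolding i = paperfolding (i + 16*k) ∧
      paperfolding (i+1) = paperfolding (i+1 + 16*k) ∧
      paperfolding (i+2) = paperfolding (i+2 + 16*k)) := by
  obtain ⟨a, r, hr, rfl⟩ : ∃ a r, r < 16 ∧ i = 16*a + r :=
    ⟨i/16, i%16, by omega, by omega⟩
  interval_cases r
  · refine Or.inr ⟨shift16 _ k ?_, shift16 _ k ?_, shift16 _ k ?_⟩ <;> omega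
  · refine Or.inr ⟨shift16 _ k ?_, shift16 _ k ?_, shift16 _ k ?_⟩ <;> omega
  · refine Or.inr ⟨shift16 _ k ?_, shift16 _ k ?_, shift16 _ k ?_⟩ <;> omega
  · refine Or.inr ⟨shift16 _ k ?_, shift16 _ k ?_, shift16 _ k ?_⟩ <;> omega
  · refine Or.inr ⟨shift16 _ k ?_, shift16 _ k ?_, shift16 _ k ?_⟩ <;> omega
  · -- r = 5
    rw [show 16*a+5+(16*k+2) = 16*(a+k)+7 by ring] at H
    simp only [p16_5, p16_7] at H
    rw [show 16*a+5+(16*k+1) = 16*(a+k)+6 by ring,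
      show 16*a+5+1+(16*k+1) = 16*(a+k)+7 by ring,
      show 16*a+5+16*k = 16*(a+k)+5 by ring,
      show 16*a+5+1+16*k = 16*(a+k)+6 by ring,
      show 16*a+5+2+16*k = 16*(a+k)+7 by ring,
      show 16*a+5+1 = 16*a+6 by ring,
      show 16*a+5+2 = 16*a+7 by ring]
    simp only [p16_5, p16_6, p16_7, true_and, and_true]
    omega
  · -- r = 6 : impossible
    rw [show 16*a+6+(16*k+2) = 16*(a+k)+8 by ring] at H
    simp only [p16_6, p16_8] at H
    exact absurd H (by omega)
  · -- r = 7
    rw [show 16*a+7+(16*k+2) = 16*(a+k)+9 by ring] at H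
    simp only [p16_7, p16_9] at H
    rw [show 16*a+7+(16*k+1) = 16*(a+k)+8 by ring,
      show 16*a+7+1+(16*k+1) = 16*(a+k)+9 by ring,
      show 16*a+7+16*k = 16*(a+k)+7 by ring,
      show 16*a+7+1+16*k = 16*(a+k)+8 by ring,
      show 16*a+7+2+16*k = 16*(a+k)+9 by ring,
      show 16*a+7+1 = 16*a+8 by ring,
      show 16*a+7+2 = 16*a+9 by ring]
    simp only [p16_7, p16_8, p16_9, true_and, and_true]
    omega
  · refine Or.inr ⟨shift16 _ k ?_, shift16 _ k ?_, shift16 _ k ?_⟩ <;> omega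
  · refine Or.inr ⟨shift16 _ k ?_, shift16 _ k ?_, shift16 _ k ?_⟩ <;> omega
  · refine Or.inr ⟨shift16 _ k ?_, shift16 _ k ?_, shift16 _ k ?_⟩ <;> omega
  · refine Or.inr ⟨shift16 _ k ?_, shift16 _ k ?_, shift16 _ k ?_⟩ <;> omega
  · refine Or.inr ⟨shift16 _ k ?_, shift16 _ k ?_, shift16 _ k ?_⟩ <;> omega
  · -- r = 13
    rw [show 16*a+13+(16*k+2) = 16*(a+k)+15 by ring] at H
    simp only [p16_13, p16_15] at H
    rw [show 16*a+13+(16*k+1) = 16*(a+k)+14 by ring,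
      show 16*a+13+1+(16*k+1) = 16*(a+k)+15 by ring,
      show 16*a+13+16*k = 16*(a+k)+13 by ring,
      show 16*a+13+1+16*k = 16*(a+k)+14 by ring,
      show 16*a+13+2+16*k = 16*(a+k)+15 by ring,
      show 16*a+13+1 = 16*a+14 by ring,
      show 16*a+13+2 = 16*a+15 by ring]
    simp only [p16_13, p16_14, p16_15, true_and, and_true]
    omega
  · -- r = 14 : impossible
    rw [show 16*a+14+(16*k+2) = 16*(a+k+1) by ring] at H
    simp only [p16_0, p16_14] at H
    exact absurd H (by omega)
  · -- r = 15
    rw [show 16*a+15+(16*k+2) = 16*(a+k+1)+1 by ring] at H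
    simp only [p16_1, p16_15] at H
    rw [show 16*a+15+(16*k+1) = 16*(a+k+1) by ring,
      show 16*a+15+1+(16*k+1) = 16*(a+k+1)+1 by ring,
      show 16*a+15+16*k = 16*(a+k)+15 by ring,
      show 16*a+15+1+16*k = 16*(a+k+1) by ring,
      show 16*a+15+2+16*k = 16*(a+k+1)+1 by ring,
      show 16*a+15+1 = 16*(a+1) by ring,
      show 16*a+15+2 = 16*(a+1)+1 by ring]
    simp only [p16_0, p16_1, p16_15, true_and, and_true]
    rcases pf_cases (a+k) with h2 | h2 <;> omega

lemma notLP (k : ℕ) (hk : 0 < k) :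
    ¬ LeastPeriod paperfolding (16*k+2) := by
  rintro ⟨i, j, hij, hper, hmin⟩
  have h1 : i + (16*k+1) ≤ j := by
    by_contra h
    push_neg at h
    refine hmin (j - i + 1) (by omega) (by omega) ?_
    intro t ht h2
    exact absurd h2 (by omega)
  have h2 : j ≤ i + (16*k+2) := by
    by_contra h
    push_neg at h
    rcases Nat.even_or_odd i with ⟨s, rfl⟩ | ⟨s, rfl⟩
    · have hc := hper (s+s) le_rfl (by omega)
      rw [show s+s+(16*k+2) = 2*(s+8*k+1) by ring, show s+s = 2*s by ring,
        pf_even, pf_even] at hc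
      omega
    · have hc := hper (2*s+1+1) (by omega) (by omega)
      rw [show 2*s+1+1+(16*k+2) = 2*(s+8*k+2) by ring,
        show 2*s+1+1 = 2*(s+1) by ring, pf_even, pf_even] at hc
      omega
  have hj : j = i + (16*k+1) ∨ j = i + (16*k+2) := by omega
  rcases hj with rfl | rfl
  · rcases borderA k i hk with h | ⟨hA, hB⟩ | ⟨hA, hB, hC⟩
    · refine hmin (16*k+1) (by omega) (by omega) ?_
      intro t ht hle
      obtain rfl : t = i := by omega
      exact h
    · refine hmin (16*k) (by omega) (by omega) ?_
      intro t ht hle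
      rcases (by omega : t = i ∨ t = i+1) with rfl | rfl
      · exact hA
      · exact hB
    · refine hmin (16*k-1) (by omega) (by omega) ?_
      intro t ht hle
      rcases (by omega : t = i ∨ t = i+1 ∨ t = i+2) with rfl | rfl | rfl
      · exact hA
      · exact hB
      · exact hC
  · have H := hper i le_rfl (by omega)
    rcases borderB k i hk H with ⟨hA, hB⟩ | ⟨hA, hB, hC⟩
    · refine hmin (16*k+1) (by omega) (by omega) ?_
      intro t ht hle
      rcases (by omega : t = i ∨ t = i+1) with rfl | rfl
      · exact hA
      · exact hB
    · refine hmin (16*k) (by omega) (by omega) ?_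
      intro t ht hle
      rcases (by omega : t = i ∨ t = i+1 ∨ t = i+2) with rfl | rfl | rfl
      · exact hA
      · exact hB
      · exact hC

theorem paperfolding_infinitely_many_non_leastPeriods :
    {q : ℕ | 0 < q ∧ ¬ LeastPeriod paperfolding q}.Infinite := by
  refine Set.infinite_of_injective_forall_mem
    (f := fun n : ℕ => 16*(n+1)+2) ?_ ?_
  · intro x y hxy
    have h : 16*(x+1)+2 = 16*(y+1)+2 := hxy
    omega
  · intro n
    refine ⟨?_, notLP (n+1) (by omega)⟩
    show 0 < 16*(n+1)+2
    omega
end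

section
/- The paperfolding sequence is the limit of the finite words p_0 = 0, p_{i+1} = p_i · 0 · reverse(complement(p_i)): for every i, the word p_i is a prefix of p_{i+1}, and the first 2^{i+1} − 1 letters of the paperfolding sequence agree with p_i. -/
/-- The finite paperfolding words: `p_0 = 0`,
`p_{i+1} = p_i · 0 · reverse (complement p_i)`. -/
def pfWord : ℕ → List ℕ
  | 0 => [0]
  | i + 1 => pfWord i ++ [0] ++ ((pfWord i).map (fun b => 1 - b)).reverse

/-! Both objects are governed by halving: `p (2t) = t % 2` and `p (2t+1) = p t`. The middle
letter of `p_{i+1}` sits at position `2^(i+1) - 1`, where `p` vanishes, and positions `a ≠ b` with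
`a + b + 2 = 2^K` carry complementary letters (halve both and induct on `K`), which is exactly what
the reversed complement in the recursion demands. -/

theorem paperfolding_two_mul (t : ℕ) : paperfolding (2 * t) = t % 2 := by
  have h : (2 * t + 1).factorization 2 = 0 :=
    Nat.factorization_eq_zero_of_not_dvd (by omega)
  simp [paperfolding, h]

theorem paperfolding_two_mul_add_one (t : ℕ) : paperfolding (2 * t + 1) = paperfolding t := by
  have h : 2 * t + 1 + 1 = 2 * (t + 1) := by ring
  simp only [paperfolding, h, Nat.factorization_mul two_ne_zero t.succ_ne_zero,
    Nat.prime_two.factorization_self, Finsupp.coe_add, Pi.add_apply, pow_add, pow_one,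
    Nat.mul_div_mul_left _ _ two_pos]

theorem paperfolding_zero : paperfolding 0 = 0 := by
  simpa using paperfolding_two_mul 0

theorem paperfolding_two_pow_sub_one (k : ℕ) : paperfolding (2 ^ k - 1) = 0 := by
  induction k with
  | zero => exact paperfolding_zero
  | succ k ih =>
    have h : 2 ^ (k + 1) - 1 = 2 * (2 ^ k - 1) + 1 := by
      have := Nat.one_le_two_pow (n := k); rw [pow_succ]; omega
    rw [h, paperfolding_two_mul_add_one, ih]

theorem paperfolding_add_paperfolding_eq_one {K a b : ℕ}
    (hab : a + b + 2 = 2 ^ K) (hne : a ≠ b) : paperfolding a + paperfolding b = 1 := by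
  induction K generalizing a b with
  | zero => simp at hab
  | succ K ih =>
    rcases K with _ | K
    · omega
    have h4 : 2 ^ (K + 2) = 4 * 2 ^ K := by ring
    obtain ⟨s, rfl | rfl⟩ := Nat.even_or_odd' a <;> obtain ⟨t, rfl | rfl⟩ := Nat.even_or_odd' b
    · rw [paperfolding_two_mul, paperfolding_two_mul]
      omega
    · omega
    · omega
    · rw [paperfolding_two_mul_add_one, paperfolding_two_mul_add_one]
      exact ih (by rw [pow_succ]; omega) (by omega)

theorem List.getD_reverse_map_of_lt {α β : Type*} (f : α → β) (l : List α) (d : α) (d' : β)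
    {j : ℕ} (hj : j < l.length) :
    (l.map f).reverse.getD j d' = f (l.getD (l.length - 1 - j) d) := by
  rw [List.getD_reverse _ (by simpa using hj), List.getD_eq_getElem _ _ (by simp; omega),
    List.getD_eq_getElem _ _ (by omega), List.getElem_map]
  simp

theorem pfWord_length (i : ℕ) : (pfWord i).length = 2 ^ (i + 1) - 1 := by
  induction i with
  | zero => rfl
  | succ i ih =>
    have := Nat.one_le_two_pow (n := i + 1)
    simp only [pfWord, List.length_append, List.length_reverse, List.length_map, ih,
      List.length_singleton, pow_succ 2 (i + 1)]
    omega

theorem pfWord_prefix_succ (i : ℕ) : pfWord i <+: pfWord (i + 1) := by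
  rw [pfWord, List.append_assoc]
  exact List.prefix_append _ _

theorem pfWord_getD (i n : ℕ) (hn : n < 2 ^ (i + 1) - 1) :
    (pfWord i).getD n 0 = paperfolding n := by
  induction i generalizing n with
  | zero =>
    obtain rfl : n = 0 := by simpa using hn
    rw [paperfolding_zero]
    rfl
  | succ i ih =>
    set L := 2 ^ (i + 1) - 1
    have hlen : (pfWord i).length = L := pfWord_length i
    have hn' : n < 2 * L + 1 := by
      have := Nat.one_le_two_pow (n := i + 1); rw [pow_succ 2 (i + 1)] at hn; omega
    rw [pfWord]
    rcases lt_trichotomy n L with h | rfl | h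
    · rw [List.getD_append _ _ _ _ (by simp; omega), List.getD_append _ _ _ _ (by omega), ih n h]
    · rw [List.getD_append _ _ _ _ (by simp [hlen]), List.getD_append_right _ _ _ _ hlen.le,
        hlen, Nat.sub_self, paperfolding_two_pow_sub_one]
      rfl
    · obtain ⟨j, rfl⟩ : ∃ j, n = L + 1 + j := ⟨n - L - 1, by omega⟩
      have hsum := paperfolding_add_paperfolding_eq_one (K := i + 2)
        (a := L - 1 - j) (b := L + 1 + j) (by rw [pow_succ 2 (i + 1)]; omega) (by omega)
      rw [List.getD_append_right _ _ _ _ (by simp; omega), List.getD_reverse_map_of_lt _ _ 0 _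
        (by simp [hlen]; omega), ih _ (by omega)]
      simp only [List.length_append, List.length_singleton, hlen, Nat.add_sub_cancel_left]
      omega

theorem paperfolding_limit_of_pfWords (i : ℕ) :
    pfWord i <+: pfWord (i + 1) ∧
      ∀ n, n < 2 ^ (i + 1) - 1 → (pfWord i).getD n 0 = paperfolding n :=
  ⟨pfWord_prefix_succ i, pfWord_getD i⟩
end
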